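/- arXiv:2303.17618 — 2 statements merged into one kernel-verified Lean document; each statement's English description precedes it below -/
import Mathlib

section
/- Given two labeled Markov chains Σ1, Σ2 over the same alphabet A inducing distributions p1^n, p2^n on A^n, the limit d(Σ1, Σ2) = lim_{n→∞} K(p1^n, p2^n) exists, where K is the Kantorovich metric with Cantor ground distance. -/
/-- The Cantor distance on `n`-long words: `2^{-l}` where `l` is the (1-based)
index of the first position at which the words differ, and `0` if they are equal. -/
noncomputable def cantorDist {A : Type*} [DecidableEq A] {n : ℕ} (w1 w2 : Fin n → A) : ℝ :=
  if h : w1 = w2 then 0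
  else ((1 : ℝ) / 2) ^
    (((Finset.univ.filter fun k => w1 k ≠ w2 k).min'
      (by
        obtain ⟨k, hk⟩ := Function.ne_iff.mp h
        exact ⟨k, Finset.mem_filter.mpr ⟨Finset.mem_univ k, hk⟩⟩) : Fin n).1 + 1)

lemma cantorDist_nonneg {A : Type*} [DecidableEq A] {n : ℕ} (w1 w2 : Fin n → A) :
    0 ≤ cantorDist w1 w2 := by
  unfold cantorDist; split <;> positivity

lemma cantorDist_le_one {A : Type*} [DecidableEq A] {n : ℕ} (w1 w2 : Fin n → A) :
    cantorDist w1 w2 ≤ 1 := by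
  unfold cantorDist; split
  · norm_num
  · exact pow_le_one₀ (by norm_num) (by norm_num)

lemma cantorDist_le_snoc {A : Type*} [DecidableEq A] {n : ℕ} (w1 w2 : Fin n → A) (a b : A) :
    cantorDist w1 w2 ≤ cantorDist (Fin.snoc w1 a) (Fin.snoc w2 b) := by
  by_cases h : w1 = w2
  · rw [show cantorDist w1 w2 = 0 by simp [cantorDist, h]]
    exact cantorDist_nonneg _ _
  · have h' : (Fin.snoc w1 a : Fin (n+1) → A) ≠ Fin.snoc w2 b := by
      intro he
      exact h (by simpa using congrArg Fin.init he)
    rw [cantorDist, cantorDist, dif_neg h, dif_neg h']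
    apply pow_le_pow_of_le_one (by norm_num) (by norm_num)
    have hne : (Finset.univ.filter fun k => w1 k ≠ w2 k).Nonempty := by
      obtain ⟨k, hk⟩ := Function.ne_iff.mp h
      exact ⟨k, Finset.mem_filter.mpr ⟨Finset.mem_univ k, hk⟩⟩
    set k := (Finset.univ.filter fun k => w1 k ≠ w2 k).min' hne with hkdef
    have hk : w1 k ≠ w2 k := (Finset.mem_filter.mp (Finset.min'_mem _ hne)).2
    have hmem : k.castSucc ∈ (Finset.univ.filter
        fun j => (Fin.snoc w1 a : Fin (n+1) → A) j ≠ (Fin.snoc w2 b : Fin (n+1) → A) j) := by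
      refine Finset.mem_filter.mpr ⟨Finset.mem_univ _, ?_⟩
      simpa [Fin.snoc_castSucc] using hk
    have := Finset.min'_le _ _ hmem
    have hle : ((Finset.univ.filter fun j => (Fin.snoc w1 a : Fin (n+1) → A) j ≠
        (Fin.snoc w2 b : Fin (n+1) → A) j).min' _ : Fin (n+1)).1 ≤ k.1 := this
    omega

/-- A probability distribution on a finite type. -/
def IsDist {X : Type*} [Fintype X] (p : X → ℝ) : Prop :=
  (∀ x, 0 ≤ p x) ∧ ∑ x, p x = 1

/-- `π` is a coupling of `p` and `q`: a nonnegative joint distribution with marginals `p`, `q`. -/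
def IsCoupling {X : Type*} [Fintype X] (π : X → X → ℝ) (p q : X → ℝ) : Prop :=
  (∀ x y, 0 ≤ π x y) ∧ (∀ x, ∑ y, π x y = p x) ∧ (∀ y, ∑ x, π x y = q y)

/-- Transport cost of a plan `π` for ground cost `d`. -/
noncomputable def transportCost {X : Type*} [Fintype X] (d : X → X → ℝ) (π : X → X → ℝ) : ℝ :=
  ∑ x, ∑ y, d x y * π x y

/-- The Kantorovich (optimal transport) cost between `p` and `q` with ground cost `d`. -/
noncomputable def kantorovich {X : Type*} [Fintype X] (d : X → X → ℝ) (p q : X → ℝ) : ℝ :=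
  sInf {c | ∃ π, IsCoupling π p q ∧ transportCost d π = c}

/-- A labeled Markov chain with finite state space `S`, alphabet `A`,
transition matrix `P`, initial measure `μ`, and labelling `L`. -/
structure MarkovChain (S A : Type*) [Fintype S] where
  P : S → S → ℝ
  μ : S → ℝ
  L : S → A
  P_nonneg : ∀ s t, 0 ≤ P s t
  P_rowSum : ∀ s, ∑ t, P s t = 1
  μ_nonneg : ∀ s, 0 ≤ μ s
  μ_sum : ∑ s, μ s = 1

/-- The probability that the Markov chain produces the label word `w`:
sum over all state paths labelled by `w` of the initial measure of the first
state times the product of transition probabilities. -/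
noncomputable def wordProb {S A : Type*} [Fintype S] [DecidableEq A]
    (M : MarkovChain S A) {n : ℕ} (w : Fin (n + 1) → A) : ℝ :=
  ∑ s : Fin (n + 1) → S,
    if ∀ i, M.L (s i) = w i then
      M.μ (s 0) * ∏ i : Fin n, M.P (s i.castSucc) (s i.succ)
    else 0

lemma snoc_prod {S A : Type*} [Fintype S] (M : MarkovChain S A) {n : ℕ}
    (s : Fin (n+1) → S) (t : S) :
    ∏ i : Fin (n+1), M.P ((Fin.snoc s t : Fin (n+2) → S) i.castSucc)
        ((Fin.snoc s t : Fin (n+2) → S) i.succ)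
      = (∏ i : Fin n, M.P (s i.castSucc) (s i.succ)) * M.P (s (Fin.last n)) t := by
  rw [Fin.prod_univ_castSucc]
  congr 1
  · refine Finset.prod_congr rfl fun i _ => ?_
    rw [Fin.snoc_castSucc, Fin.succ_castSucc, Fin.snoc_castSucc]
  · rw [Fin.succ_last, Fin.snoc_castSucc, Fin.snoc_last]

lemma snoc_zero_apply {S : Type*} {n : ℕ} (s : Fin (n+1) → S) (t : S) :
    (Fin.snoc s t : Fin (n+2) → S) 0 = s 0 := by
  rw [show (0 : Fin (n+2)) = Fin.castSucc 0 from rfl, Fin.snoc_castSucc]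

lemma wordProb_nonneg {S A : Type*} [Fintype S] [DecidableEq A]
    (M : MarkovChain S A) {n : ℕ} (w : Fin (n+1) → A) : 0 ≤ wordProb M w := by
  refine Finset.sum_nonneg fun s _ => ?_
  split
  · exact mul_nonneg (M.μ_nonneg _) (Finset.prod_nonneg fun i _ => M.P_nonneg _ _)
  · exact le_refl 0

lemma pathSum {S A : Type*} [Fintype S] (M : MarkovChain S A) :
    ∀ n : ℕ, ∑ s : Fin (n+1) → S,
      M.μ (s 0) * ∏ i : Fin n, M.P (s i.castSucc) (s i.succ) = 1
  | 0 => by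
    rw [Fintype.sum_equiv (Equiv.funUnique (Fin 1) S)
      (fun s => M.μ (s 0) * ∏ i : Fin 0, M.P (s i.castSucc) (s i.succ))
      (fun x => M.μ x) (fun s => by simp)]
    exact M.μ_sum
  | (n+1) => by
    rw [← Fintype.sum_equiv (Fin.snocEquiv fun _ => S)
      (fun p : S × (Fin (n+1) → S) =>
        M.μ (p.2 0) * ((∏ i : Fin n, M.P (p.2 i.castSucc) (p.2 i.succ))
          * M.P (p.2 (Fin.last n)) p.1))
      (fun s : Fin (n+2) → S =>
        M.μ (s 0) * ∏ i : Fin (n+1), M.P (s i.castSucc) (s i.succ))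
      (fun p => by
        simp only [Fin.snocEquiv_apply]
        rw [snoc_prod, snoc_zero_apply])]
    rw [Fintype.sum_prod_type_right]
    have : ∀ s : Fin (n+1) → S,
        ∑ t : S, M.μ (s 0) * ((∏ i : Fin n, M.P (s i.castSucc) (s i.succ))
          * M.P (s (Fin.last n)) t)
        = M.μ (s 0) * ∏ i : Fin n, M.P (s i.castSucc) (s i.succ) := by
      intro s
      rw [← Finset.mul_sum, ← Finset.mul_sum, M.P_rowSum, mul_one]
    rw [Finset.sum_congr rfl fun s _ => this s]
    exact pathSum M n

lemma wordProb_snoc_sum {S A : Type*} [Fintype S] [Fintype A] [DecidableEq A]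
    (M : MarkovChain S A) {n : ℕ} (w : Fin (n+1) → A) :
    ∑ a : A, wordProb M (Fin.snoc w a) = wordProb M w := by
  have reidx : ∀ a : A, wordProb M (Fin.snoc w a)
      = ∑ p : S × (Fin (n+1) → S),
          if (∀ i, M.L (p.2 i) = w i) ∧ M.L p.1 = a then
            M.μ (p.2 0) * ((∏ i : Fin n, M.P (p.2 i.castSucc) (p.2 i.succ))
              * M.P (p.2 (Fin.last n)) p.1)
          else 0 := by
    intro a
    rw [wordProb]
    refine (Fintype.sum_equiv (Fin.snocEquiv fun _ => S) _ _ fun p => ?_).symm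
    simp only [Fin.snocEquiv_apply]
    have hcond : (∀ i : Fin (n+2), M.L ((Fin.snoc p.2 p.1 : Fin (n+2) → S) i)
          = (Fin.snoc w a : Fin (n+2) → A) i)
        ↔ ((∀ i, M.L (p.2 i) = w i) ∧ M.L p.1 = a) := by
      constructor
      · intro h
        refine ⟨fun i => ?_, ?_⟩
        · have := h i.castSucc
          rwa [Fin.snoc_castSucc, Fin.snoc_castSucc] at this
        · have := h (Fin.last (n+1))
          rwa [Fin.snoc_last, Fin.snoc_last] at this
      · rintro ⟨h1, h2⟩ i
        refine Fin.lastCases ?_ (fun j => ?_) i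
        · rwa [Fin.snoc_last, Fin.snoc_last]
        · rw [Fin.snoc_castSucc, Fin.snoc_castSucc]; exact h1 j
    rw [if_congr hcond.symm rfl rfl, snoc_prod, snoc_zero_apply]
  rw [Finset.sum_congr rfl fun a _ => reidx a, Finset.sum_comm]
  have step : ∀ p : S × (Fin (n+1) → S),
      (∑ a : A, if (∀ i, M.L (p.2 i) = w i) ∧ M.L p.1 = a then
          M.μ (p.2 0) * ((∏ i : Fin n, M.P (p.2 i.castSucc) (p.2 i.succ))
            * M.P (p.2 (Fin.last n)) p.1) else 0)
      = (if (∀ i, M.L (p.2 i) = w i) then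
          M.μ (p.2 0) * ((∏ i : Fin n, M.P (p.2 i.castSucc) (p.2 i.succ))
            * M.P (p.2 (Fin.last n)) p.1) else 0) := by
    intro p
    by_cases hC : ∀ i, M.L (p.2 i) = w i
    · simp [eq_true hC, Finset.sum_ite_eq]
    · simp [hC]
  rw [Finset.sum_congr rfl fun p _ => step p, Fintype.sum_prod_type_right, wordProb]
  refine Finset.sum_congr rfl fun s _ => ?_
  by_cases hC : ∀ i, M.L (s i) = w i
  · simp only [eq_true hC, if_true]
    rw [← Finset.mul_sum, ← Finset.mul_sum, M.P_rowSum, mul_one]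
  · simp [hC]

lemma wordProb_isDist {S A : Type*} [Fintype S] [Fintype A] [DecidableEq A]
    (M : MarkovChain S A) (n : ℕ) :
    IsDist (fun w : Fin (n+1) → A => wordProb M w) := by
  refine ⟨fun w => wordProb_nonneg M w, ?_⟩
  have : ∀ s : Fin (n+1) → S,
      (∑ w : Fin (n+1) → A, if ∀ i, M.L (s i) = w i then
        M.μ (s 0) * ∏ i : Fin n, M.P (s i.castSucc) (s i.succ) else 0)
      = M.μ (s 0) * ∏ i : Fin n, M.P (s i.castSucc) (s i.succ) := by
    intro s
    have : ∀ w : Fin (n+1) → A, (∀ i, M.L (s i) = w i) ↔ (fun i => M.L (s i)) = w :=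
      fun w => funext_iff.symm
    rw [Finset.sum_congr rfl fun w _ => if_congr (this w) rfl rfl]
    simp [Finset.sum_ite_eq]
  simp only [wordProb]
  rw [Finset.sum_comm, Finset.sum_congr rfl fun s _ => this s]
  exact pathSum M n

lemma prod_isCoupling {X : Type*} [Fintype X] {p q : X → ℝ} (hp : IsDist p) (hq : IsDist q) :
    IsCoupling (fun x y => p x * q y) p q := by
  refine ⟨fun x y => mul_nonneg (hp.1 x) (hq.1 y), fun x => ?_, fun y => ?_⟩
  · rw [← Finset.mul_sum, hq.2, mul_one]
  · rw [← Finset.sum_mul, hp.2, one_mul]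

lemma couplings_nonempty {X : Type*} [Fintype X] {p q : X → ℝ}
    (hp : IsDist p) (hq : IsDist q) (d : X → X → ℝ) :
    {c | ∃ π, IsCoupling π p q ∧ transportCost d π = c}.Nonempty :=
  ⟨_, _, prod_isCoupling hp hq, rfl⟩

lemma cost_nonneg {X : Type*} [Fintype X] {p q : X → ℝ} {d π : X → X → ℝ}
    (hd : ∀ x y, 0 ≤ d x y) (hπ : IsCoupling π p q) : 0 ≤ transportCost d π :=
  Finset.sum_nonneg fun x _ => Finset.sum_nonneg fun y _ =>
    mul_nonneg (hd x y) (hπ.1 x y)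

lemma couplings_bddBelow {X : Type*} [Fintype X] {p q : X → ℝ} {d : X → X → ℝ}
    (hd : ∀ x y, 0 ≤ d x y) :
    BddBelow {c | ∃ π, IsCoupling π p q ∧ transportCost d π = c} := by
  refine ⟨0, fun c hc => ?_⟩
  obtain ⟨π, hπ, rfl⟩ := hc
  exact cost_nonneg hd hπ

lemma cost_le_one {X : Type*} [Fintype X] {p q : X → ℝ} {d π : X → X → ℝ}
    (hd : ∀ x y, d x y ≤ 1) (hp : IsDist p) (hπ : IsCoupling π p q) :
    transportCost d π ≤ 1 := by
  have : transportCost d π ≤ ∑ x, ∑ y, π x y := by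
    refine Finset.sum_le_sum fun x _ => Finset.sum_le_sum fun y _ => ?_
    calc d x y * π x y ≤ 1 * π x y :=
          mul_le_mul_of_nonneg_right (hd x y) (hπ.1 x y)
      _ = π x y := one_mul _
  refine this.trans ?_
  rw [Finset.sum_congr rfl fun x _ => hπ.2.1 x, hp.2]

lemma kantorovich_mono {S1 S2 A : Type*} [Fintype S1] [Fintype S2] [Fintype A] [DecidableEq A]
    (M1 : MarkovChain S1 A) (M2 : MarkovChain S2 A) (n : ℕ) :
    kantorovich cantorDist (fun w : Fin (n+1) → A => wordProb M1 w)
        (fun w : Fin (n+1) → A => wordProb M2 w)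
      ≤ kantorovich cantorDist (fun w : Fin (n+2) → A => wordProb M1 w)
          (fun w : Fin (n+2) → A => wordProb M2 w) := by
  refine le_csInf
    (couplings_nonempty (wordProb_isDist M1 (n+1)) (wordProb_isDist M2 (n+1)) _)
    fun c hc => ?_
  obtain ⟨π, hπ, rfl⟩ := hc
  set π' : (Fin (n+1) → A) → (Fin (n+1) → A) → ℝ :=
    fun w v => ∑ a : A, ∑ b : A, π (Fin.snoc w a) (Fin.snoc v b) with hπ'def
  have outer : ∀ (F : (Fin (n+2) → A) → ℝ),
      ∑ x, F x = ∑ w : Fin (n+1) → A, ∑ a : A, F (Fin.snoc w a) := by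
    intro F
    rw [← Fintype.sum_equiv (Fin.snocEquiv fun _ => A)
        (fun p : A × (Fin (n+1) → A) => F (Fin.snoc p.2 p.1)) F (fun p => rfl),
      Fintype.sum_prod_type, Finset.sum_comm]
  have hcoup : IsCoupling π' (fun w : Fin (n+1) → A => wordProb M1 w)
      (fun w : Fin (n+1) → A => wordProb M2 w) := by
    refine ⟨fun w v => Finset.sum_nonneg fun a _ => Finset.sum_nonneg fun b _ => hπ.1 _ _,
      fun w => ?_, fun v => ?_⟩
    · have h1 : ∑ v, π' w v = ∑ a : A, ∑ v : Fin (n+1) → A, ∑ b : A,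
          π (Fin.snoc w a) (Fin.snoc v b) := Finset.sum_comm
      rw [h1]
      have h2 : ∀ a : A, (∑ v : Fin (n+1) → A, ∑ b : A, π (Fin.snoc w a) (Fin.snoc v b))
          = ∑ y, π (Fin.snoc w a) y := fun a => (outer fun y => π (Fin.snoc w a) y).symm
      rw [Finset.sum_congr rfl fun a _ => h2 a,
        Finset.sum_congr rfl fun a _ => hπ.2.1 (Fin.snoc w a)]
      exact wordProb_snoc_sum M1 w
    · have h1 : ∑ w, π' w v = ∑ b : A, ∑ w : Fin (n+1) → A, ∑ a : A,
          π (Fin.snoc w a) (Fin.snoc v b) := by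
        calc ∑ w, π' w v
            = ∑ w : Fin (n+1) → A, ∑ b : A, ∑ a : A,
                π (Fin.snoc w a) (Fin.snoc v b) :=
              Finset.sum_congr rfl fun w _ => Finset.sum_comm
          _ = _ := Finset.sum_comm
      rw [h1]
      have h2 : ∀ b : A, (∑ w : Fin (n+1) → A, ∑ a : A, π (Fin.snoc w a) (Fin.snoc v b))
          = ∑ x, π x (Fin.snoc v b) := fun b => (outer fun x => π x (Fin.snoc v b)).symm
      rw [Finset.sum_congr rfl fun b _ => h2 b,
        Finset.sum_congr rfl fun b _ => hπ.2.2 (Fin.snoc v b)]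
      exact wordProb_snoc_sum M2 v
  have hcost : transportCost cantorDist π' ≤ transportCost cantorDist π := by
    have hR : transportCost cantorDist π
        = ∑ w : Fin (n+1) → A, ∑ v : Fin (n+1) → A, ∑ a : A, ∑ b : A,
            cantorDist (Fin.snoc w a) (Fin.snoc v b)
              * π (Fin.snoc w a) (Fin.snoc v b) := by
      rw [transportCost, outer]
      refine Finset.sum_congr rfl fun w _ => ?_
      calc ∑ a : A, ∑ y, cantorDist (Fin.snoc w a) y * π (Fin.snoc w a) y
          = ∑ a : A, ∑ v : Fin (n+1) → A, ∑ b : A,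
              cantorDist (Fin.snoc w a) (Fin.snoc v b)
                * π (Fin.snoc w a) (Fin.snoc v b) :=
            Finset.sum_congr rfl fun a _ =>
              outer fun y => cantorDist (Fin.snoc w a) y * π (Fin.snoc w a) y
        _ = _ := Finset.sum_comm
    rw [hR, transportCost]
    refine Finset.sum_le_sum fun w _ => ?_
    refine Finset.sum_le_sum fun v _ => ?_
    calc cantorDist w v * π' w v
        = ∑ a : A, ∑ b : A, cantorDist w v * π (Fin.snoc w a) (Fin.snoc v b) := by
          rw [hπ'def, Finset.mul_sum]
          exact Finset.sum_congr rfl fun a _ => Finset.mul_sum _ _ _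
      _ ≤ ∑ a : A, ∑ b : A, cantorDist (Fin.snoc w a) (Fin.snoc v b)
            * π (Fin.snoc w a) (Fin.snoc v b) := by
          refine Finset.sum_le_sum fun a _ => Finset.sum_le_sum fun b _ =>
            mul_le_mul_of_nonneg_right (cantorDist_le_snoc w v a b) (hπ.1 _ _)
  calc kantorovich cantorDist (fun w : Fin (n+1) → A => wordProb M1 w)
        (fun w : Fin (n+1) → A => wordProb M2 w)
      ≤ transportCost cantorDist π' :=
        csInf_le (couplings_bddBelow fun x y => cantorDist_nonneg x y)
          ⟨π', hcoup, rfl⟩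
    _ ≤ transportCost cantorDist π := hcost

/-- The limit `d(Σ1, Σ2) = lim_n K(p1^n, p2^n)` of the Kantorovich metrics (with
Cantor ground distance) between the word distributions of two labeled Markov chains exists. -/
theorem markov_distance_limit_exists {S1 S2 A : Type*} [Fintype S1] [Fintype S2]
    [Fintype A] [DecidableEq A] (M1 : MarkovChain S1 A) (M2 : MarkovChain S2 A) :
    ∃ L : ℝ,
      Filter.Tendsto
        (fun n : ℕ =>
          kantorovich cantorDist
            (fun w : Fin (n + 1) → A => wordProb M1 w)
            (fun w : Fin (n + 1) → A => wordProb M2 w))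
        Filter.atTop (nhds L) := by
  set f : ℕ → ℝ := fun n =>
    kantorovich cantorDist
      (fun w : Fin (n + 1) → A => wordProb M1 w)
      (fun w : Fin (n + 1) → A => wordProb M2 w) with hf
  have hmono : Monotone f := monotone_nat_of_le_succ fun n => kantorovich_mono M1 M2 n
  have hub : ∀ n, f n ≤ 1 := by
    intro n
    refine le_trans (csInf_le (couplings_bddBelow fun x y => cantorDist_nonneg x y)
      ⟨_, prod_isCoupling (wordProb_isDist M1 n) (wordProb_isDist M2 n), rfl⟩) ?_
    exact cost_le_one (fun x y => cantorDist_le_one x y) (wordProb_isDist M1 n)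
      (prod_isCoupling (wordProb_isDist M1 n) (wordProb_isDist M2 n))
  have hbdd : BddAbove (Set.range f) := by
    refine ⟨1, ?_⟩
    rintro _ ⟨n, rfl⟩
    exact hub n
  exact ⟨_, tendsto_atTop_ciSup hmono hbdd⟩
end

section
/- Let π be an optimal coupling for the Kantorovich problem between p1^{n+1} and p2^{n+1} on A^{n+1} with Cantor ground distance, and suppose the consistency conditions hold. Then for every word w of length n with p1^n(w) > p2^n(w): Σ_{w'≠w} Σ_{a1,a2∈A} π(w a1, w' a2) = p1^n(w) − p2^n(w) and Σ_{w'≠w} Σ_{a1,a2∈A} π(w' a1, w a2) = 0. -/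
/-!
An optimal plan never uses two routes `u → v`, `u' → v'` that the swap to `u → v'`, `u' → v`
would make cheaper. For the Cantor distance, any route entering the block of words with prefix
`w` and any route leaving it can be so improved, by the ultrametric inequality. Hence inflow or
outflow of the block vanishes, and as outflow minus inflow is `p1^n(w) - p2^n(w) > 0`, it is
the inflow.
-/

open Finset

section Words
variable {A : Type*} [Fintype A] [DecidableEq A] {n : ℕ} {M : Type*} [AddCommMonoid M]

theorem sum_filter_init_eq (w : Fin n → A) (f : (Fin (n + 1) → A) → M) :
    ∑ v : Fin (n + 1) → A with Fin.init v = w, f v = ∑ a, f (Fin.snoc w a) := by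
  have himage : ({v | Fin.init v = w} : Finset (Fin (n + 1) → A)) = univ.image (Fin.snoc w) := by
    ext v
    simp only [mem_filter, mem_univ, true_and, mem_image]
    constructor
    · rintro rfl; exact ⟨v (Fin.last n), Fin.snoc_init_self v⟩
    · rintro ⟨a, rfl⟩; exact Fin.init_snoc _ _
  rw [himage]
  exact sum_image fun a _ b _ h => Fin.snoc_right_injective (α := fun _ => A) w h

theorem sum_filter_init_mem (s : Finset (Fin n → A)) (f : (Fin (n + 1) → A) → M) :
    ∑ v : Fin (n + 1) → A with (Fin.init v : Fin n → A) ∈ s, f v = ∑ w ∈ s, ∑ a, f (Fin.snoc w a) := by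
  rw [← sum_fiberwise_eq_sum_filter]
  exact sum_congr rfl fun w _ => sum_filter_init_eq w f

end Words

section Cantor
variable {A : Type*} [DecidableEq A] {n : ℕ}

theorem cantorDist_self (x : Fin n → A) : cantorDist x x = 0 := by simp [cantorDist]

theorem cantorDist_nonneg_s15 (x y : Fin n → A) : 0 ≤ cantorDist x y := by
  unfold cantorDist; split <;> positivity

theorem exists_cantorDist_eq_of_ne {x y : Fin n → A} (h : x ≠ y) :
    ∃ k : Fin n, cantorDist x y = (1 / 2 : ℝ) ^ (k.1 + 1) ∧ x k ≠ y k ∧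
      ∀ j : Fin n, j < k → x j = y j := by
  have hne : (univ.filter fun k => x k ≠ y k).Nonempty := by
    obtain ⟨k, hk⟩ := Function.ne_iff.mp h
    exact ⟨k, mem_filter.mpr ⟨mem_univ k, hk⟩⟩
  refine ⟨_, by simp [cantorDist, h], (mem_filter.mp (min'_mem _ hne)).2, fun j hj => ?_⟩
  by_contra hxy
  exact (min'_le _ j (mem_filter.mpr ⟨mem_univ j, hxy⟩)).not_gt hj

theorem cantorDist_le_of_forall_lt_eq {x y : Fin n → A} {K : ℕ}
    (h : ∀ j : Fin n, j.1 < K → x j = y j) : cantorDist x y ≤ (1 / 2 : ℝ) ^ (K + 1) := by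
  by_cases hxy : x = y
  · rw [hxy, cantorDist_self]; positivity
  obtain ⟨k, hk, hne, -⟩ := exists_cantorDist_eq_of_ne hxy
  rw [hk]
  refine pow_le_pow_of_le_one (by norm_num) (by norm_num) ?_
  have : ¬ k.1 < K := fun hlt => hne (h k hlt)
  omega

theorem pow_le_cantorDist_of_ne {x y : Fin n → A} {K : ℕ} (j : Fin n) (hj : j.1 < K)
    (hne : x j ≠ y j) : (1 / 2 : ℝ) ^ K ≤ cantorDist x y := by
  obtain ⟨k, hk, -, hagree⟩ := exists_cantorDist_eq_of_ne fun h : x = y => hne (h ▸ rfl)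
  rw [hk]
  refine pow_le_pow_of_le_one (by norm_num) (by norm_num) ?_
  have : ¬ j < k := fun hlt => hne (hagree j hlt)
  omega

theorem cantorDist_le_max (x y z : Fin n → A) :
    cantorDist x z ≤ max (cantorDist x y) (cantorDist y z) := by
  by_cases hxz : x = z
  · rw [hxz, cantorDist_self]
    exact le_max_of_le_left (cantorDist_nonneg_s15 _ _)
  obtain ⟨k, hk, hne, -⟩ := exists_cantorDist_eq_of_ne hxz
  rw [hk]
  by_cases hxy : x k = y k
  · exact le_max_of_le_right (pow_le_cantorDist_of_ne k k.1.lt_succ_self (hxy ▸ hne))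
  · exact le_max_of_le_left (pow_le_cantorDist_of_ne k k.1.lt_succ_self hxy)

theorem cantorDist_le_of_init_eq {x y : Fin (n + 1) → A} (h : Fin.init x = Fin.init y) :
    cantorDist x y ≤ (1 / 2 : ℝ) ^ (n + 1) :=
  cantorDist_le_of_forall_lt_eq fun j hj => by
    simpa [Fin.init] using congrFun h ⟨j, hj⟩

theorem pow_le_cantorDist_of_init_ne {x y : Fin (n + 1) → A} (h : Fin.init x ≠ Fin.init y) :
    (1 / 2 : ℝ) ^ n ≤ cantorDist x y := by
  obtain ⟨i, hi⟩ := Function.ne_iff.mp h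
  exact pow_le_cantorDist_of_ne i.castSucc i.2 hi

/-- The new pair `(u', v)` is at distance `≤ 2^{-(n+1)}`, the old pairs at distance `≥ 2^{-n}`,
and by the ultrametric inequality `(u, v')` is no farther apart than the farther old pair. -/
theorem cantorDist_swap_lt {u v u' v' : Fin (n + 1) → A} {w : Fin n → A}
    (hu : Fin.init u ≠ w) (hv : Fin.init v = w) (hu' : Fin.init u' = w) (hv' : Fin.init v' ≠ w) :
    cantorDist u v' + cantorDist u' v < cantorDist u v + cantorDist u' v' := by
  have hgap : (1 / 2 : ℝ) ^ (n + 1) < (1 / 2) ^ n :=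
    pow_lt_pow_right_of_lt_one₀ (by norm_num) (by norm_num) n.lt_succ_self
  have hu'v := cantorDist_le_of_init_eq (hu'.trans hv.symm)
  have hvu' := cantorDist_le_of_init_eq (hv.trans hu'.symm)
  have huv := pow_le_cantorDist_of_init_ne (hv ▸ hu)
  have hu'v' := pow_le_cantorDist_of_init_ne (hu' ▸ Ne.symm hv')
  have hvv' : cantorDist v v' ≤ cantorDist u' v' :=
    (cantorDist_le_max v u' v').trans (max_le (by linarith) le_rfl)
  have huv' : cantorDist u v' ≤ max (cantorDist u v) (cantorDist u' v') :=
    (cantorDist_le_max u v v').trans (max_le_max le_rfl hvv')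
  rcases le_total (cantorDist u v) (cantorDist u' v') with h | h
  · rw [max_eq_right h] at huv'; linarith
  · rw [max_eq_left h] at huv'; linarith

end Cantor

section TransportCost
variable {X : Type*} [Fintype X]

theorem transportCost_add (d π σ : X → X → ℝ) :
    transportCost d (π + σ) = transportCost d π + transportCost d σ := by
  simp [transportCost, mul_add, sum_add_distrib]

theorem transportCost_sub (d π σ : X → X → ℝ) :
    transportCost d (π - σ) = transportCost d π - transportCost d σ := by
  simp [transportCost, mul_sub, sum_sub_distrib]

theorem transportCost_smul (d π : X → X → ℝ) (ε : ℝ) :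
    transportCost d (ε • π) = ε * transportCost d π := by
  simp [transportCost, mul_sum, mul_left_comm]

end TransportCost

section Exchange
variable {X : Type*} [Fintype X] [DecidableEq X]

def diracPlan (a b : X) : X → X → ℝ := fun x y => if x = a ∧ y = b then 1 else 0

/-- The signed plan rerouting unit mass from `u → v` and `u' → v'` to `u → v'` and `u' → v`. -/
def swapPlan (u v u' v' : X) : X → X → ℝ :=
  diracPlan u v' + diracPlan u' v - diracPlan u v - diracPlan u' v'

theorem sum_diracPlan_right (a b x : X) : ∑ y, diracPlan a b x y = if x = a then 1 else 0 := by
  by_cases hx : x = a <;> simp [diracPlan, hx]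

theorem sum_diracPlan_left (a b y : X) : ∑ x, diracPlan a b x y = if y = b then 1 else 0 := by
  by_cases hy : y = b <;> simp [diracPlan, hy]

theorem sum_swapPlan_right (u v u' v' x : X) : ∑ y, swapPlan u v u' v' x y = 0 := by
  simp only [swapPlan, Pi.add_apply, Pi.sub_apply, sum_add_distrib, sum_sub_distrib,
    sum_diracPlan_right]
  ring

theorem sum_swapPlan_left (u v u' v' y : X) : ∑ x, swapPlan u v u' v' x y = 0 := by
  simp only [swapPlan, Pi.add_apply, Pi.sub_apply, sum_add_distrib, sum_sub_distrib,
    sum_diracPlan_left]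
  ring

theorem transportCost_diracPlan (d : X → X → ℝ) (a b : X) :
    transportCost d (diracPlan a b) = d a b := by
  simp [transportCost, diracPlan, ite_and]

theorem transportCost_swapPlan (d : X → X → ℝ) (u v u' v' : X) :
    transportCost d (swapPlan u v u' v') = d u v' + d u' v - d u v - d u' v' := by
  simp only [swapPlan, transportCost_add, transportCost_sub, transportCost_diracPlan]

variable {π : X → X → ℝ} {p q : X → ℝ}

theorem IsCoupling.add_smul_swapPlan (hπ : IsCoupling π p q) {u v u' v' : X} {ε : ℝ}
    (hε : 0 ≤ ε) (huv : ε ≤ π u v) (hu'v' : ε ≤ π u' v') :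
    IsCoupling (π + ε • swapPlan u v u' v') p q := by
  obtain ⟨hnonneg, hrow, hcol⟩ := hπ
  refine ⟨fun x y => ?_, fun x => ?_, fun y => ?_⟩
  · simp only [Pi.add_apply, Pi.smul_apply, smul_eq_mul, swapPlan, Pi.sub_apply, diracPlan]
    have := hnonneg x y
    split_ifs <;> grind
  · simp [sum_add_distrib, ← mul_sum, sum_swapPlan_right, hrow]
  · simp [sum_add_distrib, ← mul_sum, sum_swapPlan_left, hcol]

variable {d : X → X → ℝ}

/-- Two-point cyclical monotonicity of the support of an optimal plan. -/
theorem IsCoupling.add_le_add_swap_of_optimal (hπ : IsCoupling π p q)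
    (hopt : ∀ π', IsCoupling π' p q → transportCost d π ≤ transportCost d π')
    {u v u' v' : X} (huv : 0 < π u v) (hu'v' : 0 < π u' v') :
    d u v + d u' v' ≤ d u v' + d u' v := by
  set ε := min (π u v) (π u' v')
  have hε : 0 < ε := lt_min huv hu'v'
  have := hopt _ (hπ.add_smul_swapPlan hε.le (min_le_left _ _) (min_le_right _ _))
  rw [transportCost_add, transportCost_smul, transportCost_swapPlan] at this
  nlinarith

theorem IsCoupling.sum_sub_sum_eq (hπ : IsCoupling π p q) (S : Finset X) :
    ∑ x ∈ S, p x - ∑ y ∈ S, q y = ∑ x ∈ S, ∑ y ∈ Sᶜ, π x y - ∑ x ∈ Sᶜ, ∑ y ∈ S, π x y := by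
  have hp : ∑ x ∈ S, p x = ∑ x ∈ S, ∑ y ∈ S, π x y + ∑ x ∈ S, ∑ y ∈ Sᶜ, π x y := by
    simp only [← hπ.2.1, ← sum_add_distrib, sum_add_sum_compl]
  have hq : ∑ y ∈ S, q y = ∑ x ∈ S, ∑ y ∈ S, π x y + ∑ x ∈ Sᶜ, ∑ y ∈ S, π x y := by
    rw [sum_add_sum_compl S fun x => ∑ y ∈ S, π x y, sum_comm]
    simp only [hπ.2.2]
  rw [hp, hq]; ring

/-- Inflow into `S` and outflow from `S` cannot both be positive, and outflow minus inflow is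
`p(S) - q(S) ≥ 0`. -/
theorem IsCoupling.inflow_eq_zero_of_optimal (hπ : IsCoupling π p q)
    (hopt : ∀ π', IsCoupling π' p q → transportCost d π ≤ transportCost d π') (S : Finset X)
    (hd : ∀ u ∉ S, ∀ v ∈ S, ∀ u' ∈ S, ∀ v' ∉ S, d u v' + d u' v < d u v + d u' v')
    (hS : ∑ y ∈ S, q y ≤ ∑ x ∈ S, p x) :
    ∑ x ∈ Sᶜ, ∑ y ∈ S, π x y = 0 := by
  have hdisjoint : ∀ u ∉ S, ∀ v ∈ S, ∀ u' ∈ S, ∀ v' ∉ S, π u v * π u' v' = 0 := by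
    intro u hu v hv u' hu' v' hv'
    by_contra h
    obtain ⟨h1, h2⟩ := mul_ne_zero_iff.mp h
    exact (hd u hu v hv u' hu' v' hv').not_ge <| hπ.add_le_add_swap_of_optimal hopt
      ((hπ.1 u v).lt_of_ne' h1) ((hπ.1 u' v').lt_of_ne' h2)
  have hprod : (∑ x ∈ Sᶜ, ∑ y ∈ S, π x y) * ∑ x ∈ S, ∑ y ∈ Sᶜ, π x y = 0 := by
    simp only [sum_mul_sum]
    exact sum_eq_zero fun u hu => sum_eq_zero fun u' hu' => sum_eq_zero fun v hv =>
      sum_eq_zero fun v' hv' => hdisjoint u (mem_compl.mp hu) v hv u' hu' v' (mem_compl.mp hv')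
  have hin : 0 ≤ ∑ x ∈ Sᶜ, ∑ y ∈ S, π x y := sum_nonneg fun x _ => sum_nonneg fun y _ => hπ.1 x y
  have hbalance := hπ.sum_sub_sum_eq S
  nlinarith

end Exchange

theorem optimal_coupling_prefix_flow_general {A : Type*} [Fintype A] [DecidableEq A] {n : ℕ}
    (p1 p2 : (Fin n → A) → ℝ) (q1 q2 : (Fin (n + 1) → A) → ℝ)
    (hc1 : ∀ w : Fin n → A, p1 w = ∑ a : A, q1 (Fin.snoc w a))
    (hc2 : ∀ w : Fin n → A, p2 w = ∑ a : A, q2 (Fin.snoc w a))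
    (π : (Fin (n + 1) → A) → (Fin (n + 1) → A) → ℝ) (hπ : IsCoupling π q1 q2)
    (hopt : ∀ π', IsCoupling π' q1 q2 →
      transportCost cantorDist π ≤ transportCost cantorDist π')
    (w : Fin n → A) (hw : p2 w < p1 w) :
    (∑ w' ∈ Finset.univ.filter (fun w' : Fin n → A => w' ≠ w),
        ∑ a1 : A, ∑ a2 : A, π (Fin.snoc w a1) (Fin.snoc w' a2)) = p1 w - p2 w ∧
    (∑ w' ∈ Finset.univ.filter (fun w' : Fin n → A => w' ≠ w),
        ∑ a1 : A, ∑ a2 : A, π (Fin.snoc w' a1) (Fin.snoc w a2)) = 0 := by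
  set B : Finset (Fin (n + 1) → A) := {v | Fin.init v = w}
  have hB (f : (Fin (n + 1) → A) → ℝ) : ∑ v ∈ B, f v = ∑ a, f (Fin.snoc w a) :=
    sum_filter_init_eq w f
  have hBc (f : (Fin (n + 1) → A) → ℝ) :
      ∑ v ∈ Bᶜ, f v = ∑ w' with w' ≠ w, ∑ a, f (Fin.snoc w' a) := by
    rw [← sum_filter_init_mem, compl_filter]; simp
  have hout : ∑ w' with w' ≠ w, ∑ a1, ∑ a2, π (Fin.snoc w a1) (Fin.snoc w' a2) =
      ∑ u ∈ B, ∑ v ∈ Bᶜ, π u v := by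
    simp only [hB, hBc]; exact sum_comm
  have hin : ∑ w' with w' ≠ w, ∑ a1, ∑ a2, π (Fin.snoc w' a1) (Fin.snoc w a2) =
      ∑ u ∈ Bᶜ, ∑ v ∈ B, π u v := by
    simp only [hB, hBc]
  have hmass : ∑ v ∈ B, q1 v - ∑ v ∈ B, q2 v = p1 w - p2 w := by rw [hB, hB, hc1, hc2]
  have hin0 := hπ.inflow_eq_zero_of_optimal hopt B
    (fun u hu v hv u' hu' v' hv' => cantorDist_swap_lt (by simpa [B] using hu)
      (by simpa [B] using hv) (by simpa [B] using hu') (by simpa [B] using hv'))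
    (by linarith)
  have hbalance := hπ.sum_sub_sum_eq B
  rw [hout, hin]
  constructor <;> linarith

/-- Mass-flow identities of an optimal coupling across distinct `n`-prefixes: if
`p1^n(w) > p2^n(w)` then the mass flowing out of the block of `w` is exactly
`p1^n(w) − p2^n(w)` and no mass flows into it. -/
theorem optimal_coupling_prefix_flow {A : Type*} [Fintype A] [DecidableEq A] {n : ℕ}
    (p1 p2 : (Fin n → A) → ℝ) (q1 q2 : (Fin (n + 1) → A) → ℝ)
    (hp1 : IsDist p1) (hp2 : IsDist p2) (hq1 : IsDist q1) (hq2 : IsDist q2)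
    (hc1 : ∀ w : Fin n → A, p1 w = ∑ a : A, q1 (Fin.snoc w a))
    (hc2 : ∀ w : Fin n → A, p2 w = ∑ a : A, q2 (Fin.snoc w a))
    (π : (Fin (n + 1) → A) → (Fin (n + 1) → A) → ℝ) (hπ : IsCoupling π q1 q2)
    (hopt : ∀ π', IsCoupling π' q1 q2 →
      transportCost cantorDist π ≤ transportCost cantorDist π')
    (w : Fin n → A) (hw : p2 w < p1 w) :
    (∑ w' ∈ Finset.univ.filter (fun w' : Fin n → A => w' ≠ w),
        ∑ a1 : A, ∑ a2 : A, π (Fin.snoc w a1) (Fin.snoc w' a2)) = p1 w - p2 w ∧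
    (∑ w' ∈ Finset.univ.filter (fun w' : Fin n → A => w' ≠ w),
        ∑ a1 : A, ∑ a2 : A, π (Fin.snoc w' a1) (Fin.snoc w a2)) = 0 :=
  optimal_coupling_prefix_flow_general p1 p2 q1 q2 hc1 hc2 π hπ hopt w hw
end
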